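/- (Disjointness underlying Proposition 3.3.) Let w be a permutation of the positive integers fixing every j > n, let a ≠ a' with a, a' ≤ n, and let u_1 = w·t_{a,n+1}⋯t_{a,n+m} and u_2 = w·t_{a',n+1}⋯t_{a',n+m}, each with every partial product increasing the inversion number by exactly 1. Then for every p ≥ 1, there is no permutation v that can be obtained both from u_1 and from u_2 by a sequence of p transpositions t_{c_i d_i} with c_i ≤ n < d_i, d_i pairwise distinct, c_i weakly increasing, and every partial product increasing the inversion number by exactly 1. -/

import Mathlib

/-!
Say `a < a'`. A step `u ↦ u * swap c d` of a Pieri chain raises the length by one, so it is a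
cover: `u c < u d` and no `e` strictly between `c` and `d` has `u e` strictly between `u c` and
`u d`. Hence along the chain from `u₁` the entry in position `a` only grows, from `u₁ a = n + m`,
so `v a ≥ n + m`. Along the chain from `u₂` the value `n + m` starts in position `a'` and can only
move to some `d j > n`, so `v a > n + m`, while `u₂ a = w a ≤ n`. At the step `swap a d` where the
entry in position `a` passes `n + m`, position `a'` still holds `n + m` because the `c j` increase;
then `a < a' < d` contradicts the covering condition.
-/

/-- The inversion number of a permutation of `ℕ`. -/
noncomputable def invNum (w : Equiv.Perm ℕ) : ℕ :=
  {p : ℕ × ℕ | p.1 < p.2 ∧ w p.2 < w p.1}.ncard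

/-- `PieriChain n p u v` : `v` is obtained from `u` by a sequence of `p`
transpositions `t_{cᵢdᵢ}` with `1 ≤ cᵢ ≤ n < dᵢ`, `dᵢ` pairwise distinct, `cᵢ`
weakly increasing, each step increasing the inversion number by exactly `1`. -/
def PieriChain (n p : ℕ) (u v : Equiv.Perm ℕ) : Prop :=
  ∃ c d : Fin p → ℕ,
    (∀ i j : Fin p, i ≤ j → c i ≤ c j) ∧
    (∀ i, 1 ≤ c i ∧ c i ≤ n ∧ n < d i) ∧
    Function.Injective d ∧
    (∀ i : Fin p,
      invNum (u * ((List.ofFn fun j : Fin p => Equiv.swap (c j) (d j)).take ((i : ℕ) + 1)).prod)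
        = invNum u + ((i : ℕ) + 1)) ∧
    v = u * (List.ofFn fun j : Fin p => Equiv.swap (c j) (d j)).prod

open Equiv

def invSet (w : Perm ℕ) : Set (ℕ × ℕ) := {x | x.1 < x.2 ∧ w x.2 < w x.1}

section Inversions

variable {u : Perm ℕ} {c d e N : ℕ}

lemma invNum_eq_ncard_invSet (w : Perm ℕ) : invNum w = (invSet w).ncard := rfl

lemma apply_le_of_forall_lt_apply_eq (hu : ∀ y, N < y → u y = y) {x : ℕ} (hx : x ≤ N) :
    u x ≤ N := by
  by_contra! h
  have := u.injective (hu _ h)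
  omega

lemma invSet_finite_of_forall_lt_apply_eq (hu : ∀ y, N < y → u y = y) : (invSet u).Finite := by
  refine (Set.finite_Iic (N, N)).subset ?_
  rintro ⟨p, q⟩ ⟨hpq, hqp⟩
  dsimp only at hpq hqp
  have hq : q ≤ N := by
    by_contra! hq
    rw [hu q hq] at hqp
    rcases le_or_gt p N with hp | hp
    · have := apply_le_of_forall_lt_apply_eq hu hp
      omega
    · rw [hu p hp] at hqp
      omega
  exact Prod.mk_le_mk.2 ⟨by omega, hq⟩

lemma invSet_finite_of_invNum_ne_zero (h : invNum u ≠ 0) : (invSet u).Finite :=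
  Set.finite_of_ncard_ne_zero h

/-- For `u c < u d`, this involution embeds the inversions of `u` into those of `u * swap c d`
while fixing every pair inside `[c, d]`; this is how lengths are compared below. -/
def pairSwap (c d : ℕ) (x : ℕ × ℕ) : ℕ × ℕ :=
  if x.1 < c then (x.1, swap c d x.2) else if d < x.2 then (swap c d x.1, x.2) else x

lemma pairSwap_involutive (hcd : c ≤ d) : Function.Involutive (pairSwap c d) := by
  rintro ⟨p, q⟩
  simp only [pairSwap, swap_apply_def]
  split_ifs <;> simp_all <;> omega

lemma pairSwap_eq_self {x : ℕ × ℕ} (hc : c ≤ x.1) (hd : x.2 ≤ d) : pairSwap c d x = x := by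
  simp [pairSwap, not_lt.2 hc, not_lt.2 hd]

lemma pairSwap_mem_invSet (hcd : c < d) (h : u c < u d) {x : ℕ × ℕ} (hx : x ∈ invSet u) :
    pairSwap c d x ∈ invSet (u * swap c d) := by
  obtain ⟨p, q⟩ := x
  obtain ⟨hpq, hqp⟩ := hx
  simp only [pairSwap, invSet, Set.mem_ofPred_eq, Perm.mul_apply, swap_apply_def] at *
  split_ifs <;> subst_vars <;> simp_all <;> omega

lemma invNum_add_ncard_le {E : Set (ℕ × ℕ)} (hfin : (invSet (u * swap c d)).Finite)
    (hcd : c < d) (h : u c < u d) (hE : E ⊆ invSet (u * swap c d) \ invSet u)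
    (hEbox : ∀ x ∈ E, c ≤ x.1 ∧ x.2 ≤ d) :
    invNum u + E.ncard ≤ invNum (u * swap c d) := by
  have hinv := pairSwap_involutive hcd.le
  have himage : pairSwap c d '' invSet u ⊆ invSet (u * swap c d) :=
    Set.image_subset_iff.2 fun x hx => pairSwap_mem_invSet hcd h hx
  have hEsub : E ⊆ invSet (u * swap c d) := hE.trans Set.sdiff_subset
  -- `pairSwap` fixes `E`, so an element of `E` in the image would itself be an inversion of `u`
  have hdisj : Disjoint (pairSwap c d '' invSet u) E := by
    rw [Set.disjoint_left]
    rintro _ ⟨x, hx, rfl⟩ hxE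
    have hfix := pairSwap_eq_self (hEbox _ hxE).1 (hEbox _ hxE).2
    rw [hinv] at hfix
    exact (hE hxE).2 (hfix ▸ hx)
  calc invNum u + E.ncard = (pairSwap c d '' invSet u ∪ E).ncard := by
        rw [Set.ncard_union_eq hdisj (hfin.subset himage) (hfin.subset hEsub),
          Set.ncard_image_of_injective _ hinv.injective, invNum_eq_ncard_invSet]
    _ ≤ invNum (u * swap c d) := Set.ncard_le_ncard (Set.union_subset himage hEsub) hfin

lemma apply_lt_apply_of_invNum_mul_swap (hu : (invSet u).Finite) (hcd : c < d)
    (h : invNum (u * swap c d) = invNum u + 1) : u c < u d := by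
  by_contra! hle
  have hlt : u d < u c := lt_of_le_of_ne hle (u.injective.ne hcd.ne')
  have hback : u * swap c d * swap c d = u := by simp [mul_assoc]
  have := invNum_add_ncard_le (u := u * swap c d) (E := {(c, d)}) (by rwa [hback]) hcd
    (by simpa using hlt) (by simp [hback, invSet, hcd, hlt, hle]) (by simp)
  rw [hback, Set.ncard_singleton] at this
  omega

lemma not_apply_between_of_invNum_mul_swap (h : invNum (u * swap c d) = invNum u + 1)
    (hce : c < e) (hed : e < d) : ¬ (u c < u e ∧ u e < u d) := by
  rintro ⟨hue, heu⟩
  have hcd := hce.trans hed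
  have hswap : swap c d e = e := swap_apply_of_ne_of_ne hce.ne' hed.ne
  have hcard : ({(c, d), (c, e), (e, d)} : Set (ℕ × ℕ)).ncard = 3 :=
    Set.ncard_eq_three.2 ⟨_, _, _, by simp [hed.ne'], by simp [hce.ne], by simp [hce.ne], rfl⟩
  have := invNum_add_ncard_le (E := {(c, d), (c, e), (e, d)})
    (invSet_finite_of_invNum_ne_zero (by omega)) hcd (hue.trans heu)
    (by simp [Set.insert_subset_iff, invSet, hswap]; omega) (by simp [hce.le, hed.le])
  omega

end Inversions

section Chain

variable {n p : ℕ} {u : Perm ℕ} {c d : Fin p → ℕ}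

def chainPerm (u : Perm ℕ) (c d : Fin p → ℕ) (i : ℕ) : Perm ℕ :=
  u * ((List.ofFn fun j : Fin p => swap (c j) (d j)).take i).prod

@[simp]
lemma chainPerm_zero : chainPerm u c d 0 = u := by
  simp [chainPerm]

lemma chainPerm_of_le {i : ℕ} (hi : p ≤ i) :
    chainPerm u c d i = u * (List.ofFn fun j : Fin p => swap (c j) (d j)).prod := by
  rw [chainPerm, List.take_of_length_le (by simpa using hi)]

lemma chainPerm_succ {i : ℕ} (hi : i < p) :
    chainPerm u c d (i + 1) = chainPerm u c d i * swap (c ⟨i, hi⟩) (d ⟨i, hi⟩) := by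
  simp [chainPerm, List.take_add_one, hi, mul_assoc]

lemma chainPerm_succ_apply {i : ℕ} (hi : i < p) (x : ℕ) :
    chainPerm u c d (i + 1) x = chainPerm u c d i (swap (c ⟨i, hi⟩) (d ⟨i, hi⟩) x) := by
  rw [chainPerm_succ hi, Perm.mul_apply]

lemma invNum_chainPerm_mul_swap
    (hlen : ∀ i : Fin p, invNum (chainPerm u c d (i + 1)) = invNum u + (i + 1))
    {i : ℕ} (hi : i < p) :
    invNum (chainPerm u c d i * swap (c ⟨i, hi⟩) (d ⟨i, hi⟩)) =
      invNum (chainPerm u c d i) + 1 := by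
  rw [← chainPerm_succ hi, hlen ⟨i, hi⟩]
  cases i with
  | zero => simp
  | succ i => rw [hlen ⟨i, by omega⟩]; rfl

lemma invSet_chainPerm_finite (hu : (invSet u).Finite)
    (hlen : ∀ i : Fin p, invNum (chainPerm u c d (i + 1)) = invNum u + (i + 1)) {i : ℕ}
    (hi : i ≤ p) : (invSet (chainPerm u c d i)).Finite := by
  cases i with
  | zero => simpa
  | succ i => exact invSet_finite_of_invNum_ne_zero (by rw [hlen ⟨i, by omega⟩]; omega)

lemma chainPerm_apply_ne (hd : ∀ j, n < d j) (hdinj : Function.Injective d) {x : ℕ}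
    (hx : x ≤ n) {i : ℕ} (hi : i ≤ p) {y : ℕ} (hyx : y ≠ x)
    (hyd : ∀ j : Fin p, (j : ℕ) < i → y ≠ d j) : chainPerm u c d i y ≠ u x := by
  induction i generalizing y with
  | zero => simpa using u.injective.ne hyx
  | succ i ih =>
    rw [chainPerm_succ_apply (by omega)]
    by_cases hyc : y = c ⟨i, by omega⟩
    · rw [hyc, swap_apply_left]
      refine ih (by omega) (by have := hd ⟨i, by omega⟩; omega) fun j hj => ?_
      exact hdinj.ne (Fin.ne_of_val_ne (by simp only; omega))
    · rw [swap_apply_of_ne_of_ne hyc (hyd _ (by simp))]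
      exact ih (by omega) hyx fun j hj => hyd j (by omega)

lemma chainPerm_apply_of_forall_ne (hd : ∀ j, n < d j) {x : ℕ} (hx : x ≤ n) {i : ℕ}
    (hi : i ≤ p) (hc : ∀ j : Fin p, (j : ℕ) < i → c j ≠ x) : chainPerm u c d i x = u x := by
  induction i with
  | zero => simp
  | succ i ih =>
    have hxd : x ≠ d ⟨i, by omega⟩ := by have := hd ⟨i, by omega⟩; omega
    rw [chainPerm_succ_apply (by omega), swap_apply_of_ne_of_ne (hc _ (by simp)).symm hxd]
    exact ih (by omega) fun j hj => hc j (by omega)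

lemma le_chainPerm_apply (hu : (invSet u).Finite) (hc : ∀ j, c j ≤ n) (hd : ∀ j, n < d j)
    (hlen : ∀ i : Fin p, invNum (chainPerm u c d (i + 1)) = invNum u + (i + 1)) {x : ℕ}
    (hx : x ≤ n) {i : ℕ} (hi : i ≤ p) : u x ≤ chainPerm u c d i x := by
  induction i with
  | zero => simp
  | succ i ih =>
    have hi' : i < p := by omega
    refine (ih hi'.le).trans ?_
    rw [chainPerm_succ_apply hi']
    by_cases hxc : x = c ⟨i, hi'⟩
    · rw [hxc, swap_apply_left]
      have hcd : c ⟨i, hi'⟩ < d ⟨i, hi'⟩ := (hc _).trans_lt (hd _)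
      exact (apply_lt_apply_of_invNum_mul_swap (invSet_chainPerm_finite hu hlen hi'.le) hcd
        (invNum_chainPerm_mul_swap hlen hi')).le
    · have hxd : x ≠ d ⟨i, hi'⟩ := by have := hd ⟨i, hi'⟩; omega
      rw [swap_apply_of_ne_of_ne hxc hxd]

end Chain

theorem not_pieriChain_and_pieriChain {n p a a' B : ℕ} {u₁ u₂ v : Perm ℕ} (haa' : a < a')
    (ha' : a' ≤ n) (hu₁ : (invSet u₁).Finite) (hu₁a : u₁ a = B)
    (hu₂a' : u₂ a' = B) (hu₂a : u₂ a < B) : ¬ (PieriChain n p u₁ v ∧ PieriChain n p u₂ v) := by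
  rintro ⟨⟨c₁, d₁, -, hb₁, -, hlen₁, rfl⟩, ⟨c, d, hmono, hb, hdinj, hlen, hv₂⟩⟩
  have ha : a ≤ n := by omega
  have hd (j : Fin p) : n < d j := (hb j).2.2
  have had (j : Fin p) : a ≠ d j := by have := hd j; omega
  have hv : u₁ * (List.ofFn fun j : Fin p => swap (c₁ j) (d₁ j)).prod = chainPerm u₂ c d p :=
    hv₂.trans (chainPerm_of_le le_rfl).symm
  have hB : B ≤ chainPerm u₂ c d p a := by
    rw [← hv, ← chainPerm_of_le le_rfl, ← hu₁a]
    exact le_chainPerm_apply hu₁ (fun j => (hb₁ j).2.1) (fun j => (hb₁ j).2.2) hlen₁ ha le_rfl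
  -- along the second chain the value `B` moves from `a'` only to the positions `d j > n`
  have hsa {i : ℕ} (hi : i ≤ p) : chainPerm u₂ c d i a ≠ B :=
    hu₂a' ▸ chainPerm_apply_ne hd hdinj ha' hi haa'.ne fun j _ => had j
  obtain ⟨i, hle, hgt⟩ := Nat.exists_not_and_succ_of_not_zero_of_exists
    (p := fun i => B < chainPerm u₂ c d i a) (by simpa using hu₂a.le)
    ⟨p, hB.lt_of_ne (hsa le_rfl).symm⟩
  have hi : i < p := by
    by_contra! hpi
    rw [chainPerm_of_le (by omega : p ≤ i + 1), ← chainPerm_of_le hpi] at hgt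
    exact hle hgt
  have hca : c ⟨i, hi⟩ = a := by
    by_contra hca
    rw [chainPerm_succ_apply hi, swap_apply_of_ne_of_ne (Ne.symm hca) (had _)] at hgt
    exact hle hgt
  -- `c` is weakly increasing, so position `a'` is untouched before step `i`
  have hsa' : chainPerm u₂ c d i a' = B := by
    refine (chainPerm_apply_of_forall_ne hd ha' hi.le fun j hj => ?_).trans hu₂a'
    have := hmono j ⟨i, hi⟩ (Fin.le_def.2 hj.le)
    omega
  have hsd : chainPerm u₂ c d i (d ⟨i, hi⟩) = chainPerm u₂ c d (i + 1) a := by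
    rw [chainPerm_succ_apply hi, ← hca, swap_apply_left]
  refine not_apply_between_of_invNum_mul_swap (invNum_chainPerm_mul_swap hlen hi) (e := a')
    (by omega) (by have := hd ⟨i, hi⟩; omega) ?_
  rw [hca, hsa', hsd]
  exact ⟨(not_lt.1 hle).lt_of_ne (hsa hi.le), hgt⟩

lemma prod_ofFn_swap_apply_of_ne {b N m x : ℕ} (hb : x ≠ b) (hN : ∀ j < m, x ≠ N + j) :
    (List.ofFn fun j : Fin m => swap b (N + (j : ℕ))).prod x = x := by
  have : (List.ofFn fun j : Fin m => swap b (N + (j : ℕ))).prod ∈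
      MulAction.stabilizer (Perm ℕ) x := by
    refine Subgroup.list_prod_mem _ fun σ hσ => ?_
    obtain ⟨j, rfl⟩ := List.mem_ofFn.1 hσ
    exact swap_apply_of_ne_of_ne hb (hN j j.2)
  exact this

lemma prod_ofFn_swap_apply_self {b N k : ℕ} (hb : b < N) :
    (List.ofFn fun j : Fin (k + 1) => swap b (N + (j : ℕ))).prod b = N + k := by
  rw [List.ofFn_succ', List.prod_concat, Perm.mul_apply]
  simp only [Fin.val_last, swap_apply_left, Fin.val_castSucc]
  exact prod_ofFn_swap_apply_of_ne (by omega) (by omega)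

lemma invSet_mul_prod_ofFn_swap_finite {w : Perm ℕ} {n m b : ℕ} (hfix : ∀ j, n < j → w j = j)
    (hb : b ≤ n) :
    (invSet (w * (List.ofFn fun j : Fin m => swap b (n + 1 + (j : ℕ))).prod)).Finite := by
  refine invSet_finite_of_forall_lt_apply_eq (N := n + m) fun x hx => ?_
  rw [Perm.mul_apply, prod_ofFn_swap_apply_of_ne (by omega) (by omega), hfix x (by omega)]

theorem stmt_12_general (n m : ℕ) (hm : 0 < m) (a a' : ℕ)
    (han : a ≤ n) (ha'n : a' ≤ n) (hne : a ≠ a')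
    (w u₁ u₂ : Equiv.Perm ℕ) (hfix : ∀ j, n < j → w j = j)
    (hu₁ : u₁ = w * (List.ofFn fun j : Fin m => Equiv.swap a (n + 1 + (j : ℕ))).prod)
    (hu₂ : u₂ = w * (List.ofFn fun j : Fin m => Equiv.swap a' (n + 1 + (j : ℕ))).prod) :
    ∀ p, 1 ≤ p → ¬ ∃ v, PieriChain n p u₁ v ∧ PieriChain n p u₂ v := by
  rintro p - ⟨v, hv₁, hv₂⟩
  obtain ⟨k, rfl⟩ : ∃ k, m = k + 1 := Nat.exists_eq_add_one.2 hm
  wlog haa' : a < a' generalizing a a' u₁ u₂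
  · exact this a' a ha'n han hne.symm u₂ u₁ hv₂ hv₁ hu₂ hu₁ (by omega)
  refine not_pieriChain_and_pieriChain haa' ha'n
    (hu₁ ▸ invSet_mul_prod_ofFn_swap_finite hfix han) (B := n + 1 + k) ?_ ?_ ?_ ⟨hv₁, hv₂⟩
  · rw [hu₁, Perm.mul_apply, prod_ofFn_swap_apply_self (by omega), hfix _ (by omega)]
  · rw [hu₂, Perm.mul_apply, prod_ofFn_swap_apply_self (by omega), hfix _ (by omega)]
  · rw [hu₂, Perm.mul_apply, prod_ofFn_swap_apply_of_ne hne (by omega)]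
    have := apply_le_of_forall_lt_apply_eq hfix han
    omega

/-- Disjointness underlying Proposition 3.3: with `w` fixing every `j > n`,
`a ≠ a'`, `u₁ = w·t_{a,n+1}⋯t_{a,n+m}` and `u₂ = w·t_{a',n+1}⋯t_{a',n+m}` (each
partial product increasing the length by one), no permutation `v` is reachable
from both `u₁` and `u₂` by Pieri chains of the same length `p ≥ 1`. -/
theorem stmt_12 (n m : ℕ) (hm : 0 < m) (a a' : ℕ)
    (h1a : 1 ≤ a) (han : a ≤ n) (h1a' : 1 ≤ a') (ha'n : a' ≤ n) (hne : a ≠ a')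
    (w u₁ u₂ : Equiv.Perm ℕ) (hw0 : w 0 = 0) (hfix : ∀ j, n < j → w j = j)
    (hu₁ : u₁ = w * (List.ofFn fun j : Fin m => Equiv.swap a (n + 1 + (j : ℕ))).prod)
    (hlen₁ : ∀ i : Fin m,
      invNum (w * ((List.ofFn fun j : Fin m => Equiv.swap a (n + 1 + (j : ℕ))).take ((i : ℕ) + 1)).prod)
        = invNum w + ((i : ℕ) + 1))
    (hu₂ : u₂ = w * (List.ofFn fun j : Fin m => Equiv.swap a' (n + 1 + (j : ℕ))).prod)
    (hlen₂ : ∀ i : Fin m,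
      invNum (w * ((List.ofFn fun j : Fin m => Equiv.swap a' (n + 1 + (j : ℕ))).take ((i : ℕ) + 1)).prod)
        = invNum w + ((i : ℕ) + 1)) :
    ∀ p, 1 ≤ p → ¬ ∃ v, PieriChain n p u₁ v ∧ PieriChain n p u₂ v :=
  stmt_12_general n m hm a a' han ha'n hne w u₁ u₂ hfix hu₁ hu₂
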